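/- Define f(n) = (2n+1) + Σ_{i=1}^{n} (−1)^i (2n+1−2i) [C(2n,i)/2^i + C(2n,i−1)/(3·2^{i−1})]. Then f satisfies the recursion f(2m+2) = p_m·f(2m) − q_m with p_m = (7+6m)/(16(1+6m)) and q_m = (2+m)(5+2m)(13+177m+704m²+420m³)·C(7+4m, 2+2m)·2^{−1−2m} / (48(1+4m)(3+4m)(5+4m)(7+4m)(1+6m)), and consequently f(2m) < 0 for all integers m ≥ 2. -/

import Mathlib

/-!
With `x = -1/2`, let `lowerHalfSum n = ∑_{i ≤ n} C(2n+1, i) xⁱ` and `middleTerm n = C(2n+1, n) xⁿ`.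
Pascal's rule and absorption `i C(N+1, i) = (N+1) C(N, i-1)` turn `f` into a combination of these,
`3 f(n+1) = 2(3n+4) lowerHalfSum n - (2n+3) middleTerm n`, and together with the symmetry
`C(2n+1, n+1) = C(2n+1, n)` they give first-order recursions for both sequences. Eliminating
`lowerHalfSum` between `f(2m+2)` and `f(2m)` yields the recursion, the binomial in `q_m` being a rational
multiple of `middleTerm (2m+3)`. As `p_m > 0` and `q_m ≥ 0`, negativity propagates from `f(4) = -23/24`.
-/

open Finset

/-- `f(n) = (2n+1) + Σ_{i=1}^{n} (−1)^i (2n+1−2i) [C(2n,i)/2^i + C(2n,i−1)/(3·2^{i−1})]`. -/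
noncomputable def fSeq3 (n : ℕ) : ℝ :=
  (2 * n + 1 : ℝ) +
    ∑ i ∈ Icc 1 n, (-1 : ℝ) ^ i * ((2 * n + 1 : ℝ) - 2 * i) *
      ((Nat.choose (2 * n) i : ℝ) / 2 ^ i +
        (Nat.choose (2 * n) (i - 1) : ℝ) / (3 * 2 ^ (i - 1)))

section PartialSums

variable {R : Type*} [CommSemiring R]

theorem sum_range_succ_choose_succ_mul_pow (N k : ℕ) (x : R) :
    ∑ i ∈ range (k + 1), ((N + 1).choose i : R) * x ^ i =
      ∑ i ∈ range (k + 1), (N.choose i : R) * x ^ i +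
        x * ∑ i ∈ range k, (N.choose i : R) * x ^ i := by
  have hshift : x * ∑ i ∈ range k, (N.choose i : R) * x ^ i =
      ∑ i ∈ range k, (N.choose i : R) * x ^ (i + 1) := by
    rw [mul_sum]; exact sum_congr rfl fun i _ => by ring
  rw [sum_range_succ' (fun i => ((N + 1).choose i : R) * x ^ i),
    sum_range_succ' (fun i => (N.choose i : R) * x ^ i), hshift]
  simp only [Nat.choose_succ_succ', Nat.cast_add, add_mul, sum_add_distrib, Nat.choose_zero_right]
  ring

theorem sum_range_succ_mul_choose_succ_mul_pow (N k : ℕ) (x : R) :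
    ∑ i ∈ range (k + 1), (i : R) * (N + 1).choose i * x ^ i =
      (N + 1) * x * ∑ i ∈ range k, (N.choose i : R) * x ^ i := by
  rw [sum_range_succ', mul_sum, Nat.cast_zero, zero_mul, zero_mul, add_zero]
  refine sum_congr rfl fun i _ => ?_
  have h : ((i + 1 : ℕ) : R) * (N + 1).choose (i + 1) = (N + 1) * N.choose i := by
    rw [← Nat.cast_mul, mul_comm, ← Nat.add_one_mul_choose_eq]
    push_cast
    rfl
  rw [h, pow_succ]
  ring

end PartialSums

theorem fSeq3_eq_sum_sub_sum (n : ℕ) :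
    fSeq3 n = ∑ i ∈ range (n + 1), ((2 * n + 1 : ℝ) - 2 * i) * (2 * n).choose i * (-1 / 2) ^ i -
      (1 / 3) * ∑ i ∈ range n, ((2 * n - 1 : ℝ) - 2 * i) * (2 * n).choose i * (-1 / 2) ^ i := by
  rw [fSeq3, ← Ico_add_one_right_eq_Icc, sum_Ico_eq_sum_range, Nat.add_sub_cancel, sum_range_succ',
    mul_sum, add_sub_right_comm, ← sum_sub_distrib, add_comm]
  congr 1
  · refine sum_congr rfl fun i _ => ?_
    rw [add_comm 1 i, Nat.add_sub_cancel, div_pow, div_pow]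
    push_cast
    field_simp
    ring
  · simp

noncomputable def lowerHalfSum (n : ℕ) : ℝ :=
  ∑ i ∈ range (n + 1), ((2 * n + 1).choose i : ℝ) * (-1 / 2) ^ i

noncomputable def middleTerm (n : ℕ) : ℝ :=
  ((2 * n + 1).choose n : ℝ) * (-1 / 2) ^ n

theorem sum_range_add_two_choose_eq_lowerHalfSum_sub (n : ℕ) :
    ∑ i ∈ range (n + 2), ((2 * n + 1).choose i : ℝ) * (-1 / 2) ^ i =
      lowerHalfSum n - middleTerm n / 2 := by
  rw [sum_range_succ, lowerHalfSum, middleTerm, Nat.choose_symm_half, pow_succ]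
  ring

theorem sum_range_choose_eq_lowerHalfSum_sub (n : ℕ) :
    ∑ i ∈ range n, ((2 * n + 1).choose i : ℝ) * (-1 / 2) ^ i = lowerHalfSum n - middleTerm n := by
  rw [lowerHalfSum, middleTerm, sum_range_succ]
  ring

theorem lowerHalfSum_succ (n : ℕ) :
    lowerHalfSum (n + 1) = (lowerHalfSum n - 3 * middleTerm n) / 4 := by
  rw [lowerHalfSum, show 2 * (n + 1) + 1 = 2 * n + 1 + 1 + 1 by ring,
    sum_range_succ_choose_succ_mul_pow (2 * n + 1 + 1) (n + 1),
    sum_range_succ_choose_succ_mul_pow (2 * n + 1) (n + 1),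
    sum_range_succ_choose_succ_mul_pow (2 * n + 1) n,
    sum_range_add_two_choose_eq_lowerHalfSum_sub, sum_range_choose_eq_lowerHalfSum_sub,
    ← lowerHalfSum]
  ring

theorem three_mul_fSeq3_succ (n : ℕ) :
    3 * fSeq3 (n + 1) = 2 * (3 * n + 4) * lowerHalfSum n - (2 * n + 3) * middleTerm n := by
  have hsplit (a : ℝ) (k : ℕ) :
      ∑ i ∈ range k, (a - 2 * i) * ((2 * n + 1 + 1).choose i : ℝ) * (-1 / 2) ^ i =
        a * ∑ i ∈ range k, ((2 * n + 1 + 1).choose i : ℝ) * (-1 / 2) ^ i -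
          2 * ∑ i ∈ range k, (i : ℝ) * (2 * n + 1 + 1).choose i * (-1 / 2) ^ i := by
    simp only [sub_mul, mul_sum, sum_sub_distrib, mul_assoc]
  rw [fSeq3_eq_sum_sub_sum, show 2 * (n + 1) = 2 * n + 1 + 1 by ring]
  push_cast
  rw [hsplit, hsplit, sum_range_succ_choose_succ_mul_pow (2 * n + 1) (n + 1),
    sum_range_succ_choose_succ_mul_pow (2 * n + 1) n,
    sum_range_succ_mul_choose_succ_mul_pow (2 * n + 1) (n + 1),
    sum_range_succ_mul_choose_succ_mul_pow (2 * n + 1) n,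
    sum_range_add_two_choose_eq_lowerHalfSum_sub, sum_range_choose_eq_lowerHalfSum_sub,
    ← lowerHalfSum]
  push_cast
  ring

theorem Nat.add_two_mul_choose_succ_middle (n : ℕ) :
    (n + 2) * (2 * n + 3).choose (n + 1) = 2 * (2 * n + 3) * (2 * n + 1).choose n := by
  have h := Nat.choose_mul_succ_eq (2 * n + 1 + 1) (n + 1)
  rw [show 2 * n + 1 + 1 + 1 - (n + 1) = n + 2 by omega, Nat.choose_succ_succ',
    Nat.choose_symm_half] at h
  ring_nf at h ⊢
  linarith

theorem middleTerm_succ (n : ℕ) :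
    middleTerm (n + 1) = -((2 * n + 3) / (n + 2)) * middleTerm n := by
  have h : ((n : ℝ) + 2) * (2 * n + 3).choose (n + 1) =
      2 * (2 * n + 3) * (2 * n + 1).choose n := by
    exact_mod_cast Nat.add_two_mul_choose_succ_middle n
  rw [middleTerm, middleTerm, show 2 * (n + 1) + 1 = 2 * n + 3 by ring,
    (eq_div_iff (by positivity)).mpr ((mul_comm _ _).trans h), pow_succ]
  ring

theorem choose_mul_two_zpow_eq_middleTerm (m : ℕ) :
    (Nat.choose (7 + 4 * m) (2 + 2 * m) : ℝ) * 2 ^ (-(1 : ℤ) - 2 * m) =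
      -(4 * (2 * m + 3) / (2 * m + 5)) * middleTerm (2 * m + 3) := by
  have h := Nat.choose_succ_right_eq (4 * m + 7) (2 * m + 2)
  rw [show 4 * m + 7 - (2 * m + 2) = 2 * m + 5 by omega] at h
  have hr : ((4 * m + 7).choose (2 * m + 3) : ℝ) =
      (4 * m + 7).choose (2 * m + 2) * (2 * m + 5) / (2 * m + 3) := by
    rw [eq_div_iff (by positivity)]
    exact_mod_cast h
  rw [middleTerm, show 2 * (2 * m + 3) + 1 = 4 * m + 7 by ring, hr,
    show 7 + 4 * m = 4 * m + 7 by ring, show 2 + 2 * m = 2 * m + 2 by ring,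
    show -(1 : ℤ) - 2 * m = -((2 * m + 1 : ℕ) : ℤ) by push_cast; ring, zpow_neg, zpow_natCast,
    div_pow, Odd.neg_one_pow ⟨m + 1, by ring⟩]
  field_simp
  ring

theorem fSeq3_two : fSeq3 2 = 1 / 6 := by
  norm_num [fSeq3, sum_Icc_succ_top, Nat.choose]

theorem fSeq3_two_mul_add_two (m : ℕ) :
    fSeq3 (2 * m + 2) =
      ((7 + 6 * (m : ℝ)) / (16 * (1 + 6 * m))) * fSeq3 (2 * m) -
      ((2 + (m : ℝ)) * (5 + 2 * m) * (13 + 177 * m + 704 * m ^ 2 + 420 * m ^ 3) *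
          (Nat.choose (7 + 4 * m) (2 + 2 * m) : ℝ) * 2 ^ (-(1 : ℤ) - 2 * m) /
        (48 * (1 + 4 * (m : ℝ)) * (3 + 4 * m) * (5 + 4 * m) * (7 + 4 * m) * (1 + 6 * m))) := by
  rcases m with _ | k
  · have hf₀ : fSeq3 0 = 1 := by norm_num [fSeq3]
    norm_num [fSeq3_two, hf₀, Nat.choose]
  have hf₁ := three_mul_fSeq3_succ (2 * k + 1)
  have hf₃ := three_mul_fSeq3_succ (2 * k + 3)
  rw [mul_assoc _ (Nat.choose _ _ : ℝ), choose_mul_two_zpow_eq_middleTerm,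
    show 2 * (k + 1) + 2 = 2 * k + 3 + 1 by ring, show 2 * (k + 1) = 2 * k + 1 + 1 by ring]
  linear_combination (norm := skip) (1 / 3) * hf₃ - (13 + 6 * (k : ℝ)) / (48 * (7 + 6 * k)) * hf₁
  simp only [lowerHalfSum_succ, middleTerm_succ]
  push_cast
  field_simp
  ring

theorem fSeq3_four : fSeq3 4 = -23 / 24 := by
  have h := fSeq3_two_mul_add_two 1
  norm_num [fSeq3_two, Nat.choose_eq_factorial_div_factorial, Nat.factorial] at h
  linarith

theorem fSeq3_two_mul_add_two_neg {m : ℕ} (h : fSeq3 (2 * m) < 0) : fSeq3 (2 * m + 2) < 0 := by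
  rw [fSeq3_two_mul_add_two]
  exact sub_neg.mpr ((mul_neg_of_pos_of_neg (by positivity) h).trans_le (by positivity))

theorem stmt_15 :
    (∀ m : ℕ, 2 ≤ m →
      fSeq3 (2 * m + 2) =
        ((7 + 6 * (m : ℝ)) / (16 * (1 + 6 * m))) * fSeq3 (2 * m) -
        ((2 + (m : ℝ)) * (5 + 2 * m) * (13 + 177 * m + 704 * m ^ 2 + 420 * m ^ 3) *
            (Nat.choose (7 + 4 * m) (2 + 2 * m) : ℝ) * 2 ^ (-(1 : ℤ) - 2 * m) /
          (48 * (1 + 4 * (m : ℝ)) * (3 + 4 * m) * (5 + 4 * m) * (7 + 4 * m) * (1 + 6 * m)))) ∧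
    (∀ m : ℕ, 2 ≤ m → fSeq3 (2 * m) < 0) := by
  refine ⟨fun m _ => fSeq3_two_mul_add_two m, fun m hm => ?_⟩
  induction m, hm using Nat.le_induction with
  | base => norm_num [fSeq3_four]
  | succ m _ ih => exact fSeq3_two_mul_add_two_neg ih
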